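/- arXiv:1301.1782 — 7 statements merged into one kernel-verified Lean document; each statement's English description precedes it below -/
import Mathlib

section
/- Let (X,d) be a non-branching geodesic complete separable metric space, h:[0,∞)→[0,∞) strictly convex and non-decreasing, c(x,y):=h(d(x,y)), and let Γ⊂X×X be c-cyclically monotone. If (x₀,y₀),(x₁,y₁)∈Γ are distinct pairs, then for every t∈(0,1), every t-intermediate point x₀(t) of (x₀,y₀) and every t-intermediate point x₁(t) of (x₁,y₁) satisfy d(x₀(t),x₁(t))>0. -/
open Set Metric

/-- A geodesic parametrized on `[0,1]`: `d(γ_s,γ_t) = |s-t| · d(γ_0,γ_1)`. -/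
def IsGeodesic {X : Type*} [MetricSpace X] (γ : ℝ → X) : Prop :=
  ∀ s ∈ Set.Icc (0:ℝ) 1, ∀ t ∈ Set.Icc (0:ℝ) 1,
    dist (γ s) (γ t) = |s - t| * dist (γ 0) (γ 1)

/-- A geodesic metric space: every pair of points is joined by a geodesic. -/
def GeodesicMetricSpace (X : Type*) [MetricSpace X] : Prop :=
  ∀ x y : X, ∃ γ : ℝ → X, IsGeodesic γ ∧ γ 0 = x ∧ γ 1 = y

/-- Non-branching: two geodesics agreeing on `[0,t]` for some `t ∈ (0,1)` agree on `[0,1]`. -/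
def NonBranching (X : Type*) [MetricSpace X] : Prop :=
  ∀ γ₁ γ₂ : ℝ → X, IsGeodesic γ₁ → IsGeodesic γ₂ →
    ∀ t ∈ Set.Ioo (0:ℝ) 1, (∀ s ∈ Set.Icc (0:ℝ) t, γ₁ s = γ₂ s) →
      ∀ s ∈ Set.Icc (0:ℝ) 1, γ₁ s = γ₂ s

/-- `c`-cyclical monotonicity of a set `Γ ⊆ X × X`. -/
def CyclicallyMonotone {X : Type*} (c : X → X → ℝ) (Γ : Set (X × X)) : Prop :=
  ∀ (N : ℕ) (p : Fin (N + 1) → X × X), (∀ i, p i ∈ Γ) →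
    ∑ i, c (p i).1 (p i).2 ≤ ∑ i, c (p (i + 1)).1 (p i).2

/-- `z` is a `t`-intermediate point of `(x,y)`. -/
def IsIntermediate {X : Type*} [MetricSpace X] (t : ℝ) (x y z : X) : Prop :=
  dist x z = t * dist x y ∧ dist z y = (1 - t) * dist x y

/-!
If the two `t`-intermediate points coincided at `z`, the triangle inequality through `z` would
bound the crossed distances `d(x₁,y₀)`, `d(x₀,y₁)` by the crossed convex combinations of
`d₀ = d(x₀,y₀)` and `d₁ = d(x₁,y₁)`. Strict convexity and monotonicity of `h` then turn
`c`-cyclical monotonicity of the two pairs into `d₀ = d₁ = d(x₁,y₀) = d(x₀,y₁)`, so `z` is also a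
`t`-intermediate point of `(x₀,y₁)` and of `(x₁,y₀)`. Splicing one geodesic from `x₀` to `z` with
geodesics from `z` to `y₀` and to `y₁` gives two geodesics agreeing on `[0,t]`, so non-branching
forces `y₀ = y₁`; reversing the roles of the endpoints gives `x₀ = x₁`.
-/

lemma StrictConvexOn.strictMonoOn_of_monotoneOn {s : Set ℝ} {f : ℝ → ℝ}
    (hf : StrictConvexOn ℝ s f) (hmono : MonotoneOn f s) : StrictMonoOn f s := by
  intro x hx y hy hxy
  refine (hmono hx hy hxy.le).lt_of_ne fun hfxy => ?_
  have hmid : (1 / 2 : ℝ) • x + (1 / 2 : ℝ) • y ∈ s :=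
    hf.1 hx hy (by norm_num) (by norm_num) (by norm_num)
  have hlt := hf.lt_on_open_segment' hx hy hxy.ne (by norm_num : (0 : ℝ) < 1 / 2)
    (by norm_num : (0 : ℝ) < 1 / 2) (by norm_num)
  have hle := hmono hx hmid (by simp only [smul_eq_mul]; linarith)
  rw [← hfxy, max_self] at hlt
  exact hle.not_gt hlt

lemma StrictConvexOn.eq_of_add_le_add_of_le_combo {h : ℝ → ℝ}
    (hconv : StrictConvexOn ℝ (Ici 0) h) (hmono : MonotoneOn h (Ici 0))
    {t d₀ d₁ a b : ℝ} (ht : t ∈ Ioo 0 1) (hd₀ : 0 ≤ d₀) (hd₁ : 0 ≤ d₁) (ha : 0 ≤ a) (hb : 0 ≤ b)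
    (hab : a ≤ t * d₁ + (1 - t) * d₀) (hba : b ≤ t * d₀ + (1 - t) * d₁)
    (hcost : h d₀ + h d₁ ≤ h a + h b) : d₁ = d₀ ∧ a = d₀ ∧ b = d₀ := by
  obtain ⟨ht0, ht1⟩ := ht
  have hcomb : ∀ {u v : ℝ}, 0 ≤ u → 0 ≤ v → t * u + (1 - t) * v ∈ Ici 0 := fun hu hv =>
    add_nonneg (mul_nonneg ht0.le hu) (mul_nonneg (by linarith) hv)
  have ha' := hmono ha (hcomb hd₁ hd₀) hab
  have hb' := hmono hb (hcomb hd₀ hd₁) hba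
  have hd : d₁ = d₀ := by
    by_contra hne
    have s₁ := hconv.2 (mem_Ici.2 hd₁) (mem_Ici.2 hd₀) hne ht0 (sub_pos.2 ht1)
      (add_sub_cancel t 1)
    have s₂ := hconv.2 (mem_Ici.2 hd₀) (mem_Ici.2 hd₁) (Ne.symm hne) ht0 (sub_pos.2 ht1)
      (add_sub_cancel t 1)
    simp only [smul_eq_mul] at s₁ s₂
    linarith
  subst hd
  have hstrict := hconv.strictMonoOn_of_monotoneOn hmono
  have hcomb_eq : t * d₁ + (1 - t) * d₁ = d₁ := by ring
  rw [hcomb_eq] at hab hba ha' hb'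
  refine ⟨rfl, ?_, ?_⟩
  · by_contra hne
    linarith [hstrict (mem_Ici.2 ha) (mem_Ici.2 hd₁) (lt_of_le_of_ne hab hne)]
  · by_contra hne
    linarith [hstrict (mem_Ici.2 hb) (mem_Ici.2 hd₁) (lt_of_le_of_ne hba hne)]

lemma CyclicallyMonotone.add_le_add_swap {X : Type*} {c : X → X → ℝ} {Γ : Set (X × X)}
    (hΓ : CyclicallyMonotone c Γ) {x₀ y₀ x₁ y₁ : X} (h₀ : (x₀, y₀) ∈ Γ) (h₁ : (x₁, y₁) ∈ Γ) :
    c x₀ y₀ + c x₁ y₁ ≤ c x₁ y₀ + c x₀ y₁ := by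
  simpa [Fin.sum_univ_two] using hΓ 1 ![(x₀, y₀), (x₁, y₁)] (by intro i; fin_cases i <;> simpa)

section Geodesic

variable {X : Type*} [MetricSpace X]

lemma IsIntermediate.symm {t : ℝ} {x y z : X}
    (hz : IsIntermediate t x y z) : IsIntermediate (1 - t) y x z := by
  obtain ⟨hxz, hzy⟩ := hz
  refine ⟨?_, ?_⟩ <;> rw [dist_comm y x]
  · rw [dist_comm, hzy]
  · rw [dist_comm, hxz]; ring

lemma isGeodesic_of_dist_le {γ : ℝ → X}
    (hγ : ∀ s ∈ Icc (0 : ℝ) 1, ∀ u ∈ Icc (0 : ℝ) 1, s ≤ u →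
      dist (γ s) (γ u) ≤ (u - s) * dist (γ 0) (γ 1)) :
    IsGeodesic γ := by
  have hle : ∀ s ∈ Icc (0 : ℝ) 1, ∀ u ∈ Icc (0 : ℝ) 1, s ≤ u →
      dist (γ s) (γ u) = |s - u| * dist (γ 0) (γ 1) := by
    intro s hs u hu hsu
    have h₀ := hγ 0 (left_mem_Icc.2 zero_le_one) s hs hs.1
    have h₁ := hγ u hu 1 (right_mem_Icc.2 zero_le_one) hu.2
    have h₂ := hγ s hs u hu hsu
    have hsum := dist_triangle4 (γ 0) (γ s) (γ u) (γ 1)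
    rw [abs_sub_comm, abs_of_nonneg (sub_nonneg.2 hsu)]
    linarith
  intro s hs u hu
  rcases le_total s u with hsu | hus
  · exact hle s hs u hu hsu
  · rw [dist_comm, abs_sub_comm]
    exact hle u hu s hs hus

lemma IsGeodesic.concat {σ τ : ℝ → X} (hσ : IsGeodesic σ) (hτ : IsGeodesic τ) {a : ℝ}
    (ha : a ∈ Ioo (0 : ℝ) 1) (hστ : σ 1 = τ 0)
    (hσd : dist (σ 0) (σ 1) = a * dist (σ 0) (τ 1))
    (hτd : dist (τ 0) (τ 1) = (1 - a) * dist (σ 0) (τ 1)) :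
    IsGeodesic (fun s => if s ≤ a then σ (s / a) else τ ((s - a) / (1 - a))) := by
  obtain ⟨ha0, ha1⟩ := ha
  have h1a : 0 < 1 - a := sub_pos.2 ha1
  set D := dist (σ 0) (τ 1)
  set γ : ℝ → X := fun s => if s ≤ a then σ (s / a) else τ ((s - a) / (1 - a))
  have hγσ : ∀ s ≤ a, γ s = σ (s / a) := fun s hs => if_pos hs
  have hγτ : ∀ s ≥ a, γ s = τ ((s - a) / (1 - a)) := by
    intro s hs
    rcases hs.eq_or_lt with rfl | hs
    · simp only [γ, le_refl, if_true, div_self ha0.ne', sub_self, zero_div, hστ]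
    · exact if_neg (not_le.2 hs)
  have hD : dist (γ 0) (γ 1) = D := by
    rw [hγσ 0 ha0.le, hγτ 1 ha1.le, zero_div, div_self h1a.ne']
  have hσpart : ∀ s ∈ Icc 0 a, ∀ u ∈ Icc 0 a, dist (γ s) (γ u) = |s - u| * D := by
    intro s hs u hu
    have hmem : ∀ v ∈ Icc 0 a, v / a ∈ Icc (0 : ℝ) 1 := fun v hv =>
      ⟨div_nonneg hv.1 ha0.le, (div_le_one ha0).2 hv.2⟩
    rw [hγσ s hs.2, hγσ u hu.2, hσ _ (hmem s hs) _ (hmem u hu), hσd, ← sub_div, abs_div,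
      abs_of_pos ha0]
    field_simp
  have hτpart : ∀ s ∈ Icc a 1, ∀ u ∈ Icc a 1, dist (γ s) (γ u) = |s - u| * D := by
    intro s hs u hu
    have hmem : ∀ v ∈ Icc a 1, (v - a) / (1 - a) ∈ Icc (0 : ℝ) 1 := fun v hv =>
      ⟨div_nonneg (sub_nonneg.2 hv.1) h1a.le, (div_le_one h1a).2 (by linarith [hv.2])⟩
    rw [hγτ s hs.1, hγτ u hu.1, hτ _ (hmem s hs) _ (hmem u hu), hτd, ← sub_div,
      sub_sub_sub_cancel_right, abs_div, abs_of_pos h1a]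
    field_simp
  refine isGeodesic_of_dist_le fun s hs u hu hsu => ?_
  rw [hD, ← abs_of_nonneg (sub_nonneg.2 hsu), abs_sub_comm]
  rcases le_total u a with hua | hau
  · exact (hσpart s ⟨hs.1, hsu.trans hua⟩ u ⟨hu.1, hua⟩).le
  rcases le_total a s with has | hsa
  · exact (hτpart s ⟨has, hs.2⟩ u ⟨hau, hu.2⟩).le
  calc dist (γ s) (γ u) ≤ dist (γ s) (γ a) + dist (γ a) (γ u) := dist_triangle _ _ _
    _ = |s - a| * D + |a - u| * D := by
      rw [hσpart s ⟨hs.1, hsa⟩ a ⟨ha0.le, le_rfl⟩, hτpart a ⟨le_rfl, ha1.le⟩ u ⟨hau, hu.2⟩]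
    _ = |s - u| * D := by
      rw [abs_of_nonpos (sub_nonpos.2 hsa), abs_of_nonpos (sub_nonpos.2 hau),
        abs_of_nonpos (sub_nonpos.2 hsu)]
      ring

lemma GeodesicMetricSpace.exists_isGeodesic_extend (hgeo : GeodesicMetricSpace X)
    {σ : ℝ → X} (hσ : IsGeodesic σ) {t : ℝ} (ht : t ∈ Ioo (0 : ℝ) 1) {y : X}
    (hz : IsIntermediate t (σ 0) y (σ 1)) :
    ∃ γ : ℝ → X, IsGeodesic γ ∧ (∀ s ∈ Icc 0 t, γ s = σ (s / t)) ∧ γ 1 = y := by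
  obtain ⟨τ, hτ, hτ0, hτ1⟩ := hgeo (σ 1) y
  refine ⟨_, hσ.concat hτ ht hτ0.symm (by rw [hτ1, hz.1]) (by rw [hτ0, hτ1, hz.2]),
    fun s hs => if_pos hs.2, ?_⟩
  simp only [if_neg (not_le.2 ht.2), div_self (sub_pos.2 ht.2).ne', hτ1]

lemma NonBranching.eq_of_isIntermediate (hnb : NonBranching X) (hgeo : GeodesicMetricSpace X)
    {t : ℝ} (ht : t ∈ Ioo (0 : ℝ) 1) {x y y' z : X}
    (hy : IsIntermediate t x y z) (hy' : IsIntermediate t x y' z) : y = y' := by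
  obtain ⟨σ, hσ, rfl, rfl⟩ := hgeo x z
  obtain ⟨γ, hγ, hγσ, rfl⟩ := hgeo.exists_isGeodesic_extend hσ ht hy
  obtain ⟨γ', hγ', hγ'σ, rfl⟩ := hgeo.exists_isGeodesic_extend hσ ht hy'
  exact hnb γ γ' hγ hγ' t ht (fun s hs => (hγσ s hs).trans (hγ'σ s hs).symm) 1
    (right_mem_Icc.2 zero_le_one)

end Geodesic

theorem noncrossing_general
    {X : Type*} [MetricSpace X]
    (hgeo : GeodesicMetricSpace X) (hnb : NonBranching X)
    (h : ℝ → ℝ) (hconv : StrictConvexOn ℝ (Set.Ici (0:ℝ)) h)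
    (hmono : MonotoneOn h (Set.Ici (0:ℝ)))
    (Γ : Set (X × X)) (hΓ : CyclicallyMonotone (fun x y => h (dist x y)) Γ)
    (x₀ y₀ x₁ y₁ : X) (h₀ : (x₀, y₀) ∈ Γ) (h₁ : (x₁, y₁) ∈ Γ)
    (hne : (x₀, y₀) ≠ (x₁, y₁))
    (t : ℝ) (ht : t ∈ Set.Ioo (0:ℝ) 1)
    (z₀ z₁ : X) (hz₀ : IsIntermediate t x₀ y₀ z₀) (hz₁ : IsIntermediate t x₁ y₁ z₁) :
    0 < dist z₀ z₁ := by
  refine dist_pos.2 fun hz => hne ?_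
  subst hz
  have hx₁y₀ : dist x₁ y₀ ≤ t * dist x₁ y₁ + (1 - t) * dist x₀ y₀ :=
    (dist_triangle x₁ z₀ y₀).trans_eq (by rw [hz₁.1, hz₀.2])
  have hx₀y₁ : dist x₀ y₁ ≤ t * dist x₀ y₀ + (1 - t) * dist x₁ y₁ :=
    (dist_triangle x₀ z₀ y₁).trans_eq (by rw [hz₀.1, hz₁.2])
  obtain ⟨hd, hd₁₀, hd₀₁⟩ := hconv.eq_of_add_le_add_of_le_combo hmono ht dist_nonneg
    dist_nonneg dist_nonneg dist_nonneg hx₁y₀ hx₀y₁ (hΓ.add_le_add_swap h₀ h₁)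
  have hy : y₀ = y₁ := hnb.eq_of_isIntermediate hgeo ht hz₀
    ⟨by rw [hd₀₁, hz₀.1], by rw [hd₀₁, hz₁.2, hd]⟩
  have hx : x₀ = x₁ := hnb.eq_of_isIntermediate hgeo ⟨sub_pos.2 ht.2, sub_lt_self 1 ht.1⟩
    hz₀.symm (IsIntermediate.symm ⟨by rw [hd₁₀, hz₁.1, hd], by rw [hd₁₀, hz₀.2]⟩)
  rw [hx, hy]

theorem noncrossing
    {X : Type*} [MetricSpace X] [CompleteSpace X] [TopologicalSpace.SeparableSpace X]
    (hgeo : GeodesicMetricSpace X) (hnb : NonBranching X)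
    (h : ℝ → ℝ) (hconv : StrictConvexOn ℝ (Set.Ici (0:ℝ)) h)
    (hmono : MonotoneOn h (Set.Ici (0:ℝ))) (hpos : ∀ x ∈ Set.Ici (0:ℝ), 0 ≤ h x)
    (Γ : Set (X × X)) (hΓ : CyclicallyMonotone (fun x y => h (dist x y)) Γ)
    (x₀ y₀ x₁ y₁ : X) (h₀ : (x₀, y₀) ∈ Γ) (h₁ : (x₁, y₁) ∈ Γ)
    (hne : (x₀, y₀) ≠ (x₁, y₁))
    (t : ℝ) (ht : t ∈ Set.Ioo (0:ℝ) 1)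
    (z₀ z₁ : X) (hz₀ : IsIntermediate t x₀ y₀ z₀) (hz₁ : IsIntermediate t x₁ y₁ z₁) :
    0 < dist z₀ z₁ :=
  noncrossing_general hgeo hnb h hconv hmono Γ hΓ x₀ y₀ x₁ y₁ h₀ h₁ hne t ht z₀ z₁ hz₀ hz₁
end

section
/- Let (X,d) be a metric space, h:[0,∞)→[0,∞) strictly convex and non-decreasing, and t∈(0,1). Suppose x₀,y₀,x₁,y₁∈X satisfy d(x₀,y₀)≠d(x₁,y₁) and some point z∈X is simultaneously a t-intermediate point of (x₀,y₀) and a t-intermediate point of (x₁,y₁). Then h(d(x₀,y₁))+h(d(x₁,y₀)) < h(d(x₀,y₀))+h(d(x₁,y₁)); in particular the two-point set {(x₀,y₀),(x₁,y₁)} is not c-cyclically monotone for c(x,y):=h(d(x,y)). -/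
/-!
By the triangle inequality through `z`, each crossed distance is at most the `t`-mixture of the
two original lengths `a ≠ b`: `d(x₀, y₁) ≤ t a + (1 - t) b` and `d(x₁, y₀) ≤ t b + (1 - t) a`.
Since `h` is non-decreasing and strictly convex, the crossed cost is then strictly below
`(t h a + (1 - t) h b) + (t h b + (1 - t) h a) = h a + h b`.
-/

open Set Metric

theorem StrictConvexOn.apply_combo_add_apply_swap_lt {s : Set ℝ} {f : ℝ → ℝ}
    (hf : StrictConvexOn ℝ s f) {a b t : ℝ} (ha : a ∈ s) (hb : b ∈ s) (hab : a ≠ b)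
    (ht : t ∈ Ioo (0 : ℝ) 1) :
    f (t * a + (1 - t) * b) + f (t * b + (1 - t) * a) < f a + f b := by
  obtain ⟨ht₀, ht₁⟩ := ht
  have hab' := hf.2 ha hb hab ht₀ (sub_pos.2 ht₁) (by ring)
  have hba' := hf.2 hb ha hab.symm ht₀ (sub_pos.2 ht₁) (by ring)
  simp only [smul_eq_mul] at hab' hba'
  linarith

theorem IsIntermediate.dist_cross_le {X : Type*} [MetricSpace X] {t : ℝ} {x₀ y₀ x₁ y₁ z : X}
    (hz₀ : IsIntermediate t x₀ y₀ z) (hz₁ : IsIntermediate t x₁ y₁ z) :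
    dist x₀ y₁ ≤ t * dist x₀ y₀ + (1 - t) * dist x₁ y₁ :=
  hz₀.1 ▸ hz₁.2 ▸ dist_triangle x₀ z y₁

theorem not_cyclicallyMonotone_pair {X : Type*} {c : X → X → ℝ} {x₀ y₀ x₁ y₁ : X}
    (hc : c x₀ y₁ + c x₁ y₀ < c x₀ y₀ + c x₁ y₁) :
    ¬ CyclicallyMonotone c {(x₀, y₀), (x₁, y₁)} := by
  intro hmono
  have hpair := hmono 1 ![(x₀, y₀), (x₁, y₁)] (by
    intro i
    fin_cases i <;> simp)
  rw [Fin.sum_univ_two, Fin.sum_univ_two] at hpair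
  simp only [Matrix.cons_val_zero, Matrix.cons_val_one, zero_add,
    show (1 : Fin 2) + 1 = 0 from rfl] at hpair
  linarith

theorem crossing_different_lengths_general
    {X : Type*} [MetricSpace X]
    (h : ℝ → ℝ) (hconv : StrictConvexOn ℝ (Set.Ici (0:ℝ)) h)
    (hmono : MonotoneOn h (Set.Ici (0:ℝ)))
    (t : ℝ) (ht : t ∈ Set.Ioo (0:ℝ) 1)
    (x₀ y₀ x₁ y₁ z : X) (hlen : dist x₀ y₀ ≠ dist x₁ y₁)
    (hz₀ : IsIntermediate t x₀ y₀ z) (hz₁ : IsIntermediate t x₁ y₁ z) :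
    h (dist x₀ y₁) + h (dist x₁ y₀) < h (dist x₀ y₀) + h (dist x₁ y₁) ∧
      ¬ CyclicallyMonotone (fun x y => h (dist x y)) {(x₀, y₀), (x₁, y₁)} := by
  have hmix : ∀ a b : ℝ, 0 ≤ a → 0 ≤ b → 0 ≤ t * a + (1 - t) * b := fun _ _ ha hb =>
    add_nonneg (mul_nonneg ht.1.le ha) (mul_nonneg (sub_nonneg.2 ht.2.le) hb)
  have h₀₁ : h (dist x₀ y₁) ≤ h (t * dist x₀ y₀ + (1 - t) * dist x₁ y₁) :=
    hmono dist_nonneg (hmix _ _ dist_nonneg dist_nonneg) (hz₀.dist_cross_le hz₁)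
  have h₁₀ : h (dist x₁ y₀) ≤ h (t * dist x₁ y₁ + (1 - t) * dist x₀ y₀) :=
    hmono dist_nonneg (hmix _ _ dist_nonneg dist_nonneg) (hz₁.dist_cross_le hz₀)
  have hcross : h (dist x₀ y₁) + h (dist x₁ y₀) < h (dist x₀ y₀) + h (dist x₁ y₁) :=
    (add_le_add h₀₁ h₁₀).trans_lt <|
      hconv.apply_combo_add_apply_swap_lt (mem_Ici.2 dist_nonneg) (mem_Ici.2 dist_nonneg) hlen ht
  exact ⟨hcross, not_cyclicallyMonotone_pair hcross⟩

theorem crossing_different_lengths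
    {X : Type*} [MetricSpace X]
    (h : ℝ → ℝ) (hconv : StrictConvexOn ℝ (Set.Ici (0:ℝ)) h)
    (hmono : MonotoneOn h (Set.Ici (0:ℝ))) (hpos : ∀ x ∈ Set.Ici (0:ℝ), 0 ≤ h x)
    (t : ℝ) (ht : t ∈ Set.Ioo (0:ℝ) 1)
    (x₀ y₀ x₁ y₁ z : X) (hlen : dist x₀ y₀ ≠ dist x₁ y₁)
    (hz₀ : IsIntermediate t x₀ y₀ z) (hz₁ : IsIntermediate t x₁ y₁ z) :
    h (dist x₀ y₁) + h (dist x₁ y₀) < h (dist x₀ y₀) + h (dist x₁ y₁) ∧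
      ¬ CyclicallyMonotone (fun x y => h (dist x y)) {(x₀, y₀), (x₁, y₁)} :=
  crossing_different_lengths_general h hconv hmono t ht x₀ y₀ x₁ y₁ z hlen hz₀ hz₁
end

section
/- Let (X,d) be a non-branching metric space and h:[0,∞)→[0,∞) strictly convex and non-decreasing, c(x,y):=h(d(x,y)). Let γ⁰,γ¹ be geodesics with equal lengths d(γ⁰_0,γ⁰_1)=d(γ¹_0,γ¹_1)>0 such that γ⁰_t=γ¹_t for some t∈(0,1). If c(γ⁰_0,γ⁰_1)+c(γ¹_0,γ¹_1) ≤ c(γ⁰_0,γ¹_1)+c(γ¹_0,γ⁰_1) (two-point c-cyclical monotonicity), then γ⁰=γ¹; in particular the curve γ defined by γ_s:=γ⁰_s for s∈[0,t] and γ_s:=γ¹_s for s∈[t,1] is a geodesic coinciding with γ⁰. -/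
open Set Metric

/-!
Through the meeting point, the triangle inequality gives `d(γ¹_0, γ⁰_1) ≤ L` for the common
length `L`, so monotonicity of `h` and the two-point monotonicity force `h L ≤ h (d(γ⁰_0, γ¹_1))`.
A strictly convex monotone `h` is strictly monotone, hence `L ≤ d(γ⁰_0, γ¹_1)`, and then `γ⁰` on
`[0,t]` followed by `γ¹` on `[t,1]` is a geodesic. It agrees with `γ⁰` on `[0,t]` and with `γ¹` on
`[t,1]`, so non-branching, applied to the curves and to their reversals, identifies it with both.
-/

theorem StrictConvexOn.strictMonoOn_of_monotoneOn_s2 {𝕜 β : Type*} [Field 𝕜] [LinearOrder 𝕜]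
    [IsStrictOrderedRing 𝕜] [AddCommMonoid β] [LinearOrder β] [IsOrderedAddMonoid β]
    [Module 𝕜 β] [PosSMulStrictMono 𝕜 β] {s : Set 𝕜} {f : 𝕜 → β}
    (hf : StrictConvexOn 𝕜 s f) (hm : MonotoneOn f s) : StrictMonoOn f s := by
  intro x hx y hy hxy
  obtain ⟨z, hxz, hzy⟩ := exists_between hxy
  have hz : z ∈ s :=
    hf.1.segment_subset hx hy (by rw [segment_eq_Icc hxy.le]; exact ⟨hxz.le, hzy.le⟩)
  have hzx : f x ≤ f z := hm hx hz hxz.le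
  have hzmax : f z < max (f x) (f y) :=
    hf.lt_on_openSegment hx hy hxy.ne (by rw [openSegment_eq_Ioo hxy]; exact ⟨hxz, hzy⟩)
  rcases lt_max_iff.1 hzmax with hlt | hlt
  · exact absurd hzx hlt.not_ge
  · exact hzx.trans_lt hlt

namespace IsGeodesic

variable {X : Type*} [MetricSpace X] {γ γ₀ γ₁ : ℝ → X}

theorem dist_eq_of_le (hγ : IsGeodesic γ) {s u : ℝ} (hs : 0 ≤ s) (hsu : s ≤ u) (hu : u ≤ 1) :
    dist (γ s) (γ u) = (u - s) * dist (γ 0) (γ 1) := by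
  rw [hγ s ⟨hs, hsu.trans hu⟩ u ⟨hs.trans hsu, hu⟩, abs_sub_comm,
    abs_of_nonneg (sub_nonneg.2 hsu)]

theorem comp_one_sub (hγ : IsGeodesic γ) : IsGeodesic fun s => γ (1 - s) := by
  intro s hs u hu
  have hs' : 1 - s ∈ Icc (0 : ℝ) 1 := ⟨by linarith [hs.2], by linarith [hs.1]⟩
  have hu' : 1 - u ∈ Icc (0 : ℝ) 1 := ⟨by linarith [hu.2], by linarith [hu.1]⟩
  simp only
  rw [hγ _ hs' _ hu', sub_zero, sub_self, dist_comm (γ 1), abs_sub_comm,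
    sub_sub_sub_cancel_left]

theorem of_dist_le (L : ℝ)
    (hle : ∀ s u, 0 ≤ s → s ≤ u → u ≤ 1 → dist (γ s) (γ u) ≤ (u - s) * L)
    (hL : L ≤ dist (γ 0) (γ 1)) : IsGeodesic γ := by
  have hend : dist (γ 0) (γ 1) = L :=
    le_antisymm (by simpa using hle 0 1 le_rfl zero_le_one le_rfl) hL
  have hdist : ∀ s u, 0 ≤ s → s ≤ u → u ≤ 1 → dist (γ s) (γ u) = (u - s) * L := by
    intro s u hs hsu hu
    refine le_antisymm (hle s u hs hsu hu) ?_
    have h0s := hle 0 s le_rfl hs (hsu.trans hu)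
    have hu1 := hle u 1 (hs.trans hsu) hu le_rfl
    have := dist_triangle4 (γ 0) (γ s) (γ u) (γ 1)
    linarith
  intro s hs u hu
  rw [hend]
  rcases le_total s u with hsu | hus
  · rw [hdist s u hs.1 hsu hu.2, abs_sub_comm, abs_of_nonneg (sub_nonneg.2 hsu)]
  · rw [dist_comm, hdist u s hu.1 hus hs.2, abs_of_nonneg (sub_nonneg.2 hus)]

theorem dist_le_of_apply_eq (hγ₀ : IsGeodesic γ₀) (hγ₁ : IsGeodesic γ₁) {t : ℝ}
    (ht : t ∈ Icc (0 : ℝ) 1) (hmeet : γ₀ t = γ₁ t) :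
    dist (γ₀ 0) (γ₁ 1) ≤ t * dist (γ₀ 0) (γ₀ 1) + (1 - t) * dist (γ₁ 0) (γ₁ 1) :=
  calc dist (γ₀ 0) (γ₁ 1) ≤ dist (γ₀ 0) (γ₀ t) + dist (γ₁ t) (γ₁ 1) := by
        rw [← hmeet]; exact dist_triangle _ _ _
    _ = _ := by
        rw [hγ₀.dist_eq_of_le le_rfl ht.1 ht.2, hγ₁.dist_eq_of_le ht.1 ht.2 le_rfl, sub_zero]

theorem piecewise (hγ₀ : IsGeodesic γ₀) (hγ₁ : IsGeodesic γ₁)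
    (hlen : dist (γ₀ 0) (γ₀ 1) = dist (γ₁ 0) (γ₁ 1)) {t : ℝ} (ht₀ : 0 ≤ t) (ht₁ : t < 1)
    (hmeet : γ₀ t = γ₁ t) (hfar : dist (γ₀ 0) (γ₀ 1) ≤ dist (γ₀ 0) (γ₁ 1)) :
    IsGeodesic fun s => if s ≤ t then γ₀ s else γ₁ s := by
  refine of_dist_le (dist (γ₀ 0) (γ₀ 1)) (fun s u hs hsu hu => ?_) ?_
  · by_cases hut : u ≤ t
    · rw [if_pos (hsu.trans hut), if_pos hut, hγ₀.dist_eq_of_le hs hsu hu]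
    by_cases hst : s ≤ t
    · simp only [if_pos hst, if_neg hut]
      calc dist (γ₀ s) (γ₁ u) ≤ dist (γ₀ s) (γ₀ t) + dist (γ₁ t) (γ₁ u) := by
            rw [← hmeet]; exact dist_triangle _ _ _
        _ = (u - s) * dist (γ₀ 0) (γ₀ 1) := by
            rw [hγ₀.dist_eq_of_le hs hst ht₁.le, hγ₁.dist_eq_of_le ht₀ (not_le.1 hut).le hu,
              ← hlen]
            ring
    · rw [if_neg hst, if_neg hut, hγ₁.dist_eq_of_le hs hsu hu, hlen]
  · simpa only [if_pos ht₀, if_neg (not_le.2 ht₁)] using hfar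

end IsGeodesic

theorem NonBranching.eqOn_of_eqOn_Icc_right {X : Type*} [MetricSpace X]
    (hnb : NonBranching X) {γ₁ γ₂ : ℝ → X} (hγ₁ : IsGeodesic γ₁) (hγ₂ : IsGeodesic γ₂) {t : ℝ}
    (ht : t ∈ Ioo (0 : ℝ) 1) (hagree : ∀ s ∈ Icc t 1, γ₁ s = γ₂ s) : ∀ s ∈ Icc (0 : ℝ) 1, γ₁ s = γ₂ s := by
  have hrev := hnb _ _ hγ₁.comp_one_sub hγ₂.comp_one_sub (1 - t)
    ⟨by linarith [ht.2], by linarith [ht.1]⟩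
    fun s hs => hagree (1 - s) ⟨by linarith [hs.2], by linarith [hs.1]⟩
  intro s hs
  simpa using hrev (1 - s) ⟨by linarith [hs.2], by linarith [hs.1]⟩

theorem crossing_equal_lengths_general
    {X : Type*} [MetricSpace X] (hnb : NonBranching X)
    (h : ℝ → ℝ) (hconv : StrictConvexOn ℝ (Set.Ici (0:ℝ)) h)
    (hmono : MonotoneOn h (Set.Ici (0:ℝ)))
    (γ₀ γ₁ : ℝ → X) (hg₀ : IsGeodesic γ₀) (hg₁ : IsGeodesic γ₁)
    (hlen : dist (γ₀ 0) (γ₀ 1) = dist (γ₁ 0) (γ₁ 1))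
    (t : ℝ) (ht : t ∈ Set.Ioo (0:ℝ) 1) (hmeet : γ₀ t = γ₁ t)
    (hmon : h (dist (γ₀ 0) (γ₀ 1)) + h (dist (γ₁ 0) (γ₁ 1)) ≤
      h (dist (γ₀ 0) (γ₁ 1)) + h (dist (γ₁ 0) (γ₀ 1))) :
    (∀ s ∈ Set.Icc (0:ℝ) 1, γ₀ s = γ₁ s) ∧
      IsGeodesic (fun s => if s ≤ t then γ₀ s else γ₁ s) ∧
      (∀ s ∈ Set.Icc (0:ℝ) 1, (if s ≤ t then γ₀ s else γ₁ s) = γ₀ s) := by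
  have hcross : dist (γ₁ 0) (γ₀ 1) ≤ dist (γ₀ 0) (γ₀ 1) := by
    have := hg₁.dist_le_of_apply_eq hg₀ (Ioo_subset_Icc_self ht) hmeet.symm
    rw [← hlen] at this; linarith
  have hfar : dist (γ₀ 0) (γ₀ 1) ≤ dist (γ₀ 0) (γ₁ 1) := by
    refine ((hconv.strictMonoOn_of_monotoneOn_s2 hmono).le_iff_le dist_nonneg dist_nonneg).1 ?_
    have := hmono dist_nonneg dist_nonneg hcross
    rw [← hlen] at hmon; linarith
  have hc := hg₀.piecewise hg₁ hlen ht.1.le ht.2 hmeet hfar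
  have hc₀ : ∀ s ∈ Icc (0 : ℝ) 1, (if s ≤ t then γ₀ s else γ₁ s) = γ₀ s :=
    hnb _ _ hc hg₀ t ht fun s hs => if_pos hs.2
  have hc₁ : ∀ s ∈ Icc (0 : ℝ) 1, (if s ≤ t then γ₀ s else γ₁ s) = γ₁ s := by
    refine hnb.eqOn_of_eqOn_Icc_right hc hg₁ ht fun s hs => ?_
    rcases hs.1.eq_or_lt with rfl | hts
    · simpa using hmeet
    · exact if_neg (not_le.2 hts)
  exact ⟨fun s hs => (hc₀ s hs).symm.trans (hc₁ s hs), hc, hc₀⟩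

theorem crossing_equal_lengths
    {X : Type*} [MetricSpace X] (hnb : NonBranching X)
    (h : ℝ → ℝ) (hconv : StrictConvexOn ℝ (Set.Ici (0:ℝ)) h)
    (hmono : MonotoneOn h (Set.Ici (0:ℝ))) (hpos : ∀ x ∈ Set.Ici (0:ℝ), 0 ≤ h x)
    (γ₀ γ₁ : ℝ → X) (hg₀ : IsGeodesic γ₀) (hg₁ : IsGeodesic γ₁)
    (hlen : dist (γ₀ 0) (γ₀ 1) = dist (γ₁ 0) (γ₁ 1))
    (hposlen : 0 < dist (γ₀ 0) (γ₀ 1))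
    (t : ℝ) (ht : t ∈ Set.Ioo (0:ℝ) 1) (hmeet : γ₀ t = γ₁ t)
    (hmon : h (dist (γ₀ 0) (γ₀ 1)) + h (dist (γ₁ 0) (γ₁ 1)) ≤
      h (dist (γ₀ 0) (γ₁ 1)) + h (dist (γ₁ 0) (γ₀ 1))) :
    (∀ s ∈ Set.Icc (0:ℝ) 1, γ₀ s = γ₁ s) ∧
      IsGeodesic (fun s => if s ≤ t then γ₀ s else γ₁ s) ∧
      (∀ s ∈ Set.Icc (0:ℝ) 1, (if s ≤ t then γ₀ s else γ₁ s) = γ₀ s) :=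
  crossing_equal_lengths_general hnb h hconv hmono γ₀ γ₁ hg₀ hg₁ hlen t ht hmeet hmon
end

section
/- Let Λ⊂Γ be compact and let {y_i}_{i∈ℕ}⊂P₂(Λ) be dense in P₂(Λ). For n∈ℕ and i≤n define E_n(i):={x∈P₁(Λ) : c(x,y_i)−φ^c(y_i) ≤ c(x,y_j)−φ^c(y_j) for all j=1,…,n} and Λ_n:=⋃_{i=1}^n E_n(i)×{y_i}. Then Λ_n is c-cyclically monotone and P₁(Λ_n)=P₁(Λ). -/
open Set Metric

/-- The contact set `Γ = {(x,y) ∈ K × K : φ(x) + φᶜ(y) = c(x,y)}` of a pair of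
Kantorovich potentials for the cost `c(x,y) = h(d(x,y))`. -/
def contactSet {X : Type*} [MetricSpace X] (h : ℝ → ℝ) (φ φc : X → ℝ) (K : Set X) :
    Set (X × X) :=
  {p | p.1 ∈ K ∧ p.2 ∈ K ∧ φ p.1 + φc p.2 = h (dist p.1 p.2)}

/-- The set `E_n(i) = {x ∈ P₁(Λ) : c(x,y_i) - φᶜ(y_i) ≤ c(x,y_j) - φᶜ(y_j), j = 1,…,n}`
(here indices run over `0,…,n-1`). -/
def En {X : Type*} [MetricSpace X] (h : ℝ → ℝ) (φc : X → ℝ) (Λ : Set (X × X))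
    (y : ℕ → X) (n i : ℕ) : Set X :=
  {x ∈ Prod.fst '' Λ |
    ∀ j < n, h (dist x (y i)) - φc (y i) ≤ h (dist x (y j)) - φc (y j)}

/-- The approximating set `Λ_n = ⋃_{i<n} E_n(i) × {y_i}`. -/
def Λn {X : Type*} [MetricSpace X] (h : ℝ → ℝ) (φc : X → ℝ) (Λ : Set (X × X))
    (y : ℕ → X) (n : ℕ) : Set (X × X) :=
  ⋃ i < n, En h φc Λ y n i ×ˢ ({y i} : Set X)

/-!
For `(x, y_i) ∈ Λ_n`, the point `y_i` minimises `y ↦ c(x, y) - φᶜ(y)` over the second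
projection of `Λ_n`. Adding these inequalities along a cycle, the `φᶜ` terms telescope away,
leaving cyclical monotonicity. Every `x ∈ P₁(Λ)` lies in `E_n(i)` for an index `i < n`
minimising `c(x, y_i) - φᶜ(y_i)`.
-/

theorem CyclicallyMonotone.of_sub_le {X : Type*} (c : X → X → ℝ) (ψ : X → ℝ)
    (Γ : Set (X × X)) (hΓ : ∀ p ∈ Γ, ∀ q ∈ Γ, c p.1 p.2 - ψ p.2 ≤ c p.1 q.2 - ψ q.2) :
    CyclicallyMonotone c Γ := by
  intro N p hp
  have hstep : ∀ i, c (p (i + 1)).1 (p (i + 1)).2 - ψ (p (i + 1)).2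
      ≤ c (p (i + 1)).1 (p i).2 - ψ (p i).2 := fun i => hΓ _ (hp _) _ (hp i)
  have hshift : ∑ i, (c (p (i + 1)).1 (p (i + 1)).2 - ψ (p (i + 1)).2)
      = ∑ i, (c (p i).1 (p i).2 - ψ (p i).2) :=
    Equiv.sum_comp (Equiv.addRight 1) fun i => c (p i).1 (p i).2 - ψ (p i).2
  have hsum := Finset.sum_le_sum fun i (_ : i ∈ Finset.univ) => hstep i
  rw [hshift, Finset.sum_sub_distrib, Finset.sum_sub_distrib] at hsum
  linarith

section Approximation

variable {X : Type*} [MetricSpace X] (h : ℝ → ℝ) (φc : X → ℝ) (Λ : Set (X × X))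
  (y : ℕ → X) {n : ℕ}

theorem mem_Λn_iff {p : X × X} :
    p ∈ Λn h φc Λ y n ↔ ∃ i < n, p.1 ∈ En h φc Λ y n i ∧ p.2 = y i := by
  simp only [Λn, mem_iUnion, mem_prod, mem_singleton_iff, exists_prop]

theorem Λn_sub_le {p q : X × X} (hp : p ∈ Λn h φc Λ y n) (hq : q ∈ Λn h φc Λ y n) :
    h (dist p.1 p.2) - φc p.2 ≤ h (dist p.1 q.2) - φc q.2 := by
  obtain ⟨_, -, ⟨-, hmin⟩, hp₂⟩ := (mem_Λn_iff h φc Λ y).1 hp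
  obtain ⟨j, hj, -, hq₂⟩ := (mem_Λn_iff h φc Λ y).1 hq
  rw [hp₂, hq₂]
  exact hmin j hj

theorem cyclicallyMonotone_Λn :
    CyclicallyMonotone (fun a b => h (dist a b)) (Λn h φc Λ y n) :=
  CyclicallyMonotone.of_sub_le _ φc _ fun _ hp _ hq => Λn_sub_le h φc Λ y hp hq

theorem exists_mem_En (hn : 0 < n) {x : X} (hx : x ∈ Prod.fst '' Λ) :
    ∃ i < n, x ∈ En h φc Λ y n i := by
  obtain ⟨i, hi, hmin⟩ := Finset.exists_min_image (Finset.range n)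
    (fun j => h (dist x (y j)) - φc (y j)) ⟨0, Finset.mem_range.2 hn⟩
  exact ⟨i, Finset.mem_range.1 hi, hx, fun j hj => hmin j (Finset.mem_range.2 hj)⟩

theorem fst_image_Λn (hn : 0 < n) : Prod.fst '' Λn h φc Λ y n = Prod.fst '' Λ := by
  refine Subset.antisymm ?_ fun x hx => ?_
  · rintro _ ⟨p, hp, rfl⟩
    obtain ⟨_, -, hp₁, -⟩ := (mem_Λn_iff h φc Λ y).1 hp
    exact hp₁.1
  · obtain ⟨i, hi, hxi⟩ := exists_mem_En h φc Λ y hn hx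
    exact ⟨(x, y i), (mem_Λn_iff h φc Λ y).2 ⟨i, hi, hxi, rfl⟩, rfl⟩

end Approximation

theorem approximating_sets_cyclically_monotone_general
    {X : Type*} [MetricSpace X] (h : ℝ → ℝ) (φc : X → ℝ) (Λ : Set (X × X)) (y : ℕ → X)
    (n : ℕ) (hn : 1 ≤ n) :
    CyclicallyMonotone (fun a b => h (dist a b)) (Λn h φc Λ y n) ∧
      Prod.fst '' Λn h φc Λ y n = Prod.fst '' Λ :=
  ⟨cyclicallyMonotone_Λn h φc Λ y, fst_image_Λn h φc Λ y hn⟩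

theorem approximating_sets_cyclically_monotone
    {X : Type*} [MetricSpace X] [CompleteSpace X] [TopologicalSpace.SeparableSpace X]
    (h : ℝ → ℝ) (hconv : StrictConvexOn ℝ (Set.Ici (0:ℝ)) h)
    (hmono : MonotoneOn h (Set.Ici (0:ℝ))) (hpos : ∀ x ∈ Set.Ici (0:ℝ), 0 ≤ h x)
    (K : Set X) (hK : IsCompact K)
    (φ φc : X → ℝ) (hφ : ContinuousOn φ K) (hφc : ContinuousOn φc K)
    (hpot : ∀ x ∈ K, ∀ y ∈ K, φ x + φc y ≤ h (dist x y))
    (Λ : Set (X × X)) (hΛcpt : IsCompact Λ) (hΛΓ : Λ ⊆ contactSet h φ φc K)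
    (y : ℕ → X) (hyin : ∀ i, y i ∈ Prod.snd '' Λ)
    (hydense : Prod.snd '' Λ ⊆ closure (Set.range y))
    (n : ℕ) (hn : 1 ≤ n) :
    CyclicallyMonotone (fun a b => h (dist a b)) (Λn h φc Λ y n) ∧
      Prod.fst '' Λn h φc Λ y n = Prod.fst '' Λ :=
  approximating_sets_cyclically_monotone_general h φc Λ y n hn
end

section
/- Let Λ⊂Γ be compact, {y_i}_{i∈ℕ}⊂P₂(Λ) dense in P₂(Λ), and for n∈ℕ set E_n(i):={x∈P₁(Λ) : c(x,y_i)−φ^c(y_i) ≤ c(x,y_j)−φ^c(y_j), j=1,…,n} and Λ_n:=⋃_{i=1}^n E_n(i)×{y_i}. If a subsequence Λ_{n_k} converges in the Hausdorff distance on compact subsets of K×K to a compact set Θ, then Θ ⊂ (P₁(Λ)×P₂(Λ))∩Γ; that is, every (x,y)∈Θ satisfies x∈P₁(Λ), y∈P₂(Λ) and φ(x)+φ^c(y)=c(x,y). -/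
/-!
A point `(x₀, y₀)` of `Θ` is a limit of points `(x_k, y_{i_k}) ∈ Λ_{n_k}`, so it lies in the
closed set `P₁(Λ) × P₂(Λ)`. Each `x_k` prefers `y_{i_k}` to every `y_j`, `j < n_k`, for
`z ↦ c(x_k, z) - φᶜ(z)`. The cost is continuous (a convex `h` that is monotone on `[0, ∞)` is
continuous at `0` as well), so letting `k → ∞` and then using the density of the `y_j` shows
that `y₀` minimises `z ↦ c(x₀, z) - φᶜ(z)` over `P₂(Λ)`. As `x₀` is paired in `Λ ⊆ Γ` with some
`z₀`, this minimum is at most `c(x₀, z₀) - φᶜ(z₀) = φ(x₀)`, so `φ(x₀) + φᶜ(y₀) ≥ c(x₀, y₀)`.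
-/

open Set Metric Filter

open scoped Topology

lemma ConvexOn.continuousWithinAt_Ici_of_monotoneOn {f : ℝ → ℝ} {a : ℝ}
    (hc : ConvexOn ℝ (Ici a) f) (hm : MonotoneOn f (Ici a)) :
    ContinuousWithinAt f (Ici a) a := by
  -- Near `a`, `f` is squeezed between `f a` and its chord from `a` to `a + 1`.
  have hupper : ∀ t ∈ Icc a (a + 1), f t ≤ f a + (t - a) * (f (a + 1) - f a) := by
    intro t ht
    have hcomb := hc.2 self_mem_Ici (show a + 1 ∈ Ici a by simp)
      (by linarith [ht.2] : 0 ≤ 1 - (t - a)) (sub_nonneg.2 ht.1) (by ring)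
    have ht' : (1 - (t - a)) • a + (t - a) • (a + 1) = t := by
      simp only [smul_eq_mul]; ring
    rw [ht'] at hcomb
    simp only [smul_eq_mul] at hcomb
    linarith
  have hline : Tendsto (fun t => f a + (t - a) * (f (a + 1) - f a)) (𝓝[≥] a) (𝓝 (f a)) := by
    have hcont : Continuous fun t => f a + (t - a) * (f (a + 1) - f a) := by fun_prop
    simpa using (hcont.tendsto a).mono_left nhdsWithin_le_nhds
  refine tendsto_of_tendsto_of_tendsto_of_le_of_le' tendsto_const_nhds hline ?_ ?_
  · filter_upwards [self_mem_nhdsWithin] with t ht using hm self_mem_Ici ht ht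
  · filter_upwards [Ico_mem_nhdsGE (lt_add_one a)] with t ht
    exact hupper t (Ico_subset_Icc_self ht)

lemma Metric.exists_tendsto_of_hausdorffDist_tendsto_zero {α : Type*} [PseudoMetricSpace α]
    {A : ℕ → Set α} {B : Set α} (hAB : Tendsto (fun k => hausdorffDist (A k) B) atTop (𝓝 0))
    (hfin : ∀ᶠ k in atTop, hausdorffEDist (A k) B ≠ ⊤) {p : α} (hp : p ∈ B) :
    ∃ q : ℕ → α, (∀ᶠ k in atTop, q k ∈ A k) ∧ Tendsto q atTop (𝓝 p) := by
  have hchoice : ∀ k : ℕ, ∃ x, hausdorffEDist (A k) B ≠ ⊤ →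
      x ∈ A k ∧ dist x p < hausdorffDist (A k) B + 1 / ((k : ℝ) + 1) := by
    intro k
    by_cases hk : hausdorffEDist (A k) B = ⊤
    · exact ⟨p, fun hk' => absurd hk hk'⟩
    · obtain ⟨x, hx, hxp⟩ := exists_dist_lt_of_hausdorffDist_lt' hp
        (lt_add_of_pos_right _ Nat.one_div_pos_of_nat) hk
      exact ⟨x, fun _ => ⟨hx, hxp⟩⟩
  choose q hq using hchoice
  refine ⟨q, hfin.mono fun k hk => (hq k hk).1, ?_⟩
  rw [tendsto_iff_dist_tendsto_zero]
  refine squeeze_zero' (Eventually.of_forall fun k => dist_nonneg)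
    (hfin.mono fun k hk => (hq k hk).2.le) ?_
  simpa using hAB.add tendsto_one_div_add_atTop_nhds_zero_nat

section CostSub

variable {X : Type*} [MetricSpace X] {h : ℝ → ℝ} {φc : X → ℝ}

lemma continuousOn_cost_sub {S : Set X} (hh : ContinuousOn h (Ici 0))
    (hφc : ContinuousOn φc S) :
    ContinuousOn (fun r : X × X => h (dist r.1 r.2) - φc r.2) (univ ×ˢ S) :=
  (hh.comp continuous_dist.continuousOn fun _ _ => dist_nonneg).sub
    (hφc.comp continuousOn_snd fun _ hr => hr.2)

variable {Λ : Set (X × X)} {y : ℕ → X}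

lemma Λn_subset_prod (hy : ∀ i, y i ∈ Prod.snd '' Λ) (n : ℕ) :
    Λn h φc Λ y n ⊆ (Prod.fst '' Λ) ×ˢ (Prod.snd '' Λ) := by
  intro p hp
  simp only [Λn, mem_iUnion] at hp
  obtain ⟨i, -, hx, hyi⟩ := hp
  exact ⟨hx.1, (mem_singleton_iff.1 hyi) ▸ hy i⟩

lemma Λn_nonempty (hΛ : Λ.Nonempty) {n : ℕ} (hn : 0 < n) : (Λn h φc Λ y n).Nonempty := by
  obtain ⟨x, hx⟩ := hΛ.image Prod.fst
  obtain ⟨i, hi, hmin⟩ := Finset.exists_min_image (Finset.range n)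
    (fun j => h (dist x (y j)) - φc (y j)) ⟨0, Finset.mem_range.2 hn⟩
  refine ⟨(x, y i), ?_⟩
  simp only [Λn, mem_iUnion]
  exact ⟨i, Finset.mem_range.1 hi, ⟨hx, fun j hj => hmin j (Finset.mem_range.2 hj)⟩, rfl⟩

lemma cost_sub_le_of_mem_Λn {n j : ℕ} {p : X × X} (hp : p ∈ Λn h φc Λ y n) (hj : j < n) :
    h (dist p.1 p.2) - φc p.2 ≤ h (dist p.1 (y j)) - φc (y j) := by
  simp only [Λn, mem_iUnion] at hp
  obtain ⟨i, -, hx, hyi⟩ := hp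
  rw [mem_singleton_iff.1 hyi]
  exact hx.2 j hj

lemma hausdorffEDist_Λn_ne_top (hΛ : IsCompact Λ) (hy : ∀ i, y i ∈ Prod.snd '' Λ) {n : ℕ}
    (hn : 0 < n) {Θ : Set (X × X)} (hΘ : Bornology.IsBounded Θ) (hΘne : Θ.Nonempty) :
    hausdorffEDist (Λn h φc Λ y n) Θ ≠ ⊤ :=
  hausdorffEDist_ne_top_of_nonempty_of_bounded
    (Λn_nonempty (Nonempty.of_image ⟨_, hy 0⟩) hn) hΘne
    (((hΛ.image continuous_fst).prod (hΛ.image continuous_snd)).isBounded.subset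
      (Λn_subset_prod hy n)) hΘ

lemma le_of_tendsto_of_mem_Λn
    (hF : ContinuousOn (fun r : X × X => h (dist r.1 r.2) - φc r.2) (univ ×ˢ (Prod.snd '' Λ)))
    (hΛ : IsClosed (Prod.snd '' Λ)) (hy : ∀ i, y i ∈ Prod.snd '' Λ) {n : ℕ → ℕ}
    (hn : Tendsto n atTop atTop) {q : ℕ → X × X} {p : X × X}
    (hq : ∀ᶠ k in atTop, q k ∈ Λn h φc Λ y (n k)) (hqp : Tendsto q atTop (𝓝 p)) (j : ℕ) :
    h (dist p.1 p.2) - φc p.2 ≤ h (dist p.1 (y j)) - φc (y j) := by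
  set F := fun r : X × X => h (dist r.1 r.2) - φc r.2
  have hFj : ContinuousOn (fun r => F r - F (r.1, y j)) (univ ×ˢ (Prod.snd '' Λ)) :=
    hF.sub (hF.comp (continuous_fst.prodMk continuous_const).continuousOn
      fun _ _ => ⟨mem_univ _, hy j⟩)
  have hclosed :
      IsClosed ((univ ×ˢ (Prod.snd '' Λ)) ∩ (fun r => F r - F (r.1, y j)) ⁻¹' Iic 0) :=
    hFj.preimage_isClosed_of_isClosed (isClosed_univ.prod hΛ) isClosed_Iic
  have hmem := hclosed.mem_of_tendsto hqp <| (hq.and (hn.eventually_gt_atTop j)).mono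
    fun k hk => ⟨⟨mem_univ _, (Λn_subset_prod hy _ hk.1).2⟩,
      sub_nonpos.2 (cost_sub_le_of_mem_Λn hk.1 hk.2)⟩
  exact sub_nonpos.1 hmem.2

lemma le_cost_sub_of_forall_le
    (hF : ContinuousOn (fun r : X × X => h (dist r.1 r.2) - φc r.2) (univ ×ˢ (Prod.snd '' Λ)))
    (hy : ∀ i, y i ∈ Prod.snd '' Λ) (hdense : Prod.snd '' Λ ⊆ closure (range y))
    {x : X} {a : ℝ} (hle : ∀ j, a ≤ h (dist x (y j)) - φc (y j)) :
    ∀ z ∈ Prod.snd '' Λ, a ≤ h (dist x z) - φc z := by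
  intro z hz
  have hFx : ContinuousOn (fun w => h (dist x w) - φc w) (Prod.snd '' Λ) :=
    hF.comp (continuousOn_const.prodMk continuousOn_id) fun _ hw => ⟨mem_univ _, hw⟩
  exact ContinuousWithinAt.closure_le (hdense hz) continuousWithinAt_const
    ((hFx z hz).mono (range_subset_iff.2 hy)) (forall_mem_range.2 hle)

end CostSub

-- Hausdorff convergence is stated for Mathlib's product metric on `X × X`, which is
-- bi-Lipschitz equivalent to the metric `√(d₁² + d₂²)`.
theorem hausdorff_limit_in_contact_set_general
    {X : Type*} [MetricSpace X]
    (h : ℝ → ℝ) (hconv : StrictConvexOn ℝ (Set.Ici (0:ℝ)) h)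
    (hmono : MonotoneOn h (Set.Ici (0:ℝ)))
    (K : Set X)
    (φ φc : X → ℝ) (hφc : ContinuousOn φc K)
    (hpot : ∀ x ∈ K, ∀ y ∈ K, φ x + φc y ≤ h (dist x y))
    (Λ : Set (X × X)) (hΛcpt : IsCompact Λ) (hΛΓ : Λ ⊆ contactSet h φ φc K)
    (y : ℕ → X) (hyin : ∀ i, y i ∈ Prod.snd '' Λ)
    (hydense : Prod.snd '' Λ ⊆ closure (Set.range y))
    (nseq : ℕ → ℕ) (hnseq : StrictMono nseq)
    (Θ : Set (X × X)) (hΘcpt : IsCompact Θ)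
    (hconv' : Tendsto (fun k => hausdorffDist (Λn h φc Λ y (nseq k)) Θ) atTop (nhds 0)) :
    Θ ⊆ ((Prod.fst '' Λ) ×ˢ (Prod.snd '' Λ)) ∩ contactSet h φ φc K := by
  rintro ⟨x₀, y₀⟩ hp
  have hP1 : IsCompact (Prod.fst '' Λ) := hΛcpt.image continuous_fst
  have hP2 : IsCompact (Prod.snd '' Λ) := hΛcpt.image continuous_snd
  have hP2K : Prod.snd '' Λ ⊆ K := image_subset_iff.2 fun r hr => (hΛΓ hr).2.1
  have hn := hnseq.tendsto_atTop
  obtain ⟨q, hqΛn, hqp⟩ := exists_tendsto_of_hausdorffDist_tendsto_zero hconv'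
    ((hn.eventually_gt_atTop 0).mono fun k hk =>
      hausdorffEDist_Λn_ne_top hΛcpt hyin hk hΘcpt.isBounded ⟨_, hp⟩) hp
  have hpΛ : (x₀, y₀) ∈ (Prod.fst '' Λ) ×ˢ (Prod.snd '' Λ) :=
    (hP1.prod hP2).isClosed.mem_of_tendsto hqp (hqΛn.mono fun k hk => Λn_subset_prod hyin _ hk)
  have hF := continuousOn_cost_sub (hconv.convexOn.continuousOn_Ici
    (hconv.convexOn.continuousWithinAt_Ici_of_monotoneOn hmono)) (hφc.mono hP2K)
  have hmin := le_cost_sub_of_forall_le hF hyin hydense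
    (le_of_tendsto_of_mem_Λn hF hP2.isClosed hyin hn hqΛn hqp)
  obtain ⟨⟨x, z₀⟩, hxz₀, rfl⟩ := hpΛ.1
  obtain ⟨hxK, -, hΓ⟩ := hΛΓ hxz₀
  have hyK := hP2K hpΛ.2
  refine ⟨hpΛ, hxK, hyK, le_antisymm (hpot _ hxK _ hyK) ?_⟩
  linarith [hmin z₀ ⟨_, hxz₀, rfl⟩]

/-- Hausdorff limits of the approximating sets `Λ_{n_k}` are contained in
`(P₁(Λ) × P₂(Λ)) ∩ Γ`.  (Hausdorff convergence is stated for Mathlib's product metric on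
`X × X`, which is bi-Lipschitz equivalent to the metric `√(d₁² + d₂²)`.) -/
theorem hausdorff_limit_in_contact_set
    {X : Type*} [MetricSpace X] [CompleteSpace X] [TopologicalSpace.SeparableSpace X]
    (h : ℝ → ℝ) (hconv : StrictConvexOn ℝ (Set.Ici (0:ℝ)) h)
    (hmono : MonotoneOn h (Set.Ici (0:ℝ))) (hpos : ∀ x ∈ Set.Ici (0:ℝ), 0 ≤ h x)
    (K : Set X) (hK : IsCompact K)
    (φ φc : X → ℝ) (hφ : ContinuousOn φ K) (hφc : ContinuousOn φc K)
    (hpot : ∀ x ∈ K, ∀ y ∈ K, φ x + φc y ≤ h (dist x y))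
    (Λ : Set (X × X)) (hΛcpt : IsCompact Λ) (hΛΓ : Λ ⊆ contactSet h φ φc K)
    (y : ℕ → X) (hyin : ∀ i, y i ∈ Prod.snd '' Λ)
    (hydense : Prod.snd '' Λ ⊆ closure (Set.range y))
    (nseq : ℕ → ℕ) (hnseq : StrictMono nseq)
    (Θ : Set (X × X)) (hΘcpt : IsCompact Θ) (hΘK : Θ ⊆ K ×ˢ K)
    (hconv' : Tendsto (fun k => hausdorffDist (Λn h φc Λ y (nseq k)) Θ) atTop (nhds 0)) :
    Θ ⊆ ((Prod.fst '' Λ) ×ˢ (Prod.snd '' Λ)) ∩ contactSet h φ φc K :=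
  hausdorff_limit_in_contact_set_general h hconv hmono K φ φc hφc hpot Λ hΛcpt hΛΓ y hyin hydense
    nseq hnseq Θ hΘcpt hconv'
end

section
/- Let X be a complete separable metric space, μ₀,μ₁ Borel probability measures on X, and c:X×X→[0,∞] Borel measurable. Suppose the Kantorovich problem inf{∫c dπ : π∈Π(μ₀,μ₁)} admits a minimizer with finite cost, and suppose every minimizer π is induced by a map, i.e. π=(id,T_π)_♯μ₀ for some Borel map T_π:X→X. Then the minimizer is unique: any two minimizers coincide. -/
/-!
Average two minimizers `π` and `π'`. Both marginal constraints and the cost are affine, so the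
average `σ` is again a minimizer, hence `σ` is the law of `x ↦ (x, T x)` under `μ₀` for some
Borel `T`, and `σ` is concentrated on the graph of `T`. Since `π, π' ≪ σ`, both `π` and `π'`
are concentrated on that graph as well, and a measure on `X × X` concentrated on the graph of
`T` is determined by its first marginal, which is `μ₀` for both. Separability is what makes
the diagonal of `X × X`, hence the graph of `T`, measurable.
-/

open MeasureTheory
open scoped ENNReal

/-- `π` is a coupling of `(μ₀, μ₁)`: a probability measure on `X × X` with marginals
`μ₀` and `μ₁`. -/
def IsCoupling {X : Type*} [MeasurableSpace X] (π : Measure (X × X))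
    (μ₀ μ₁ : Measure X) : Prop :=
  IsProbabilityMeasure π ∧ π.map Prod.fst = μ₀ ∧ π.map Prod.snd = μ₁

/-- `π` is a minimizer (optimal transport plan) of the Kantorovich problem for `c`. -/
def IsOptimalPlan {X : Type*} [MeasurableSpace X] (c : X × X → ENNReal)
    (μ₀ μ₁ : Measure X) (π : Measure (X × X)) : Prop :=
  IsCoupling π μ₀ μ₁ ∧
    ∀ π' : Measure (X × X), IsCoupling π' μ₀ μ₁ → ∫⁻ p, c p ∂π ≤ ∫⁻ p, c p ∂π'

section Couplings

variable {X : Type*} [MeasurableSpace X] {μ₀ μ₁ : Measure X} {π π' : Measure (X × X)}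
  {s t : ℝ≥0∞}

theorem IsCoupling.smul_add_smul (hπ : IsCoupling π μ₀ μ₁) (hπ' : IsCoupling π' μ₀ μ₁)
    (hst : s + t = 1) : IsCoupling (s • π + t • π') μ₀ μ₁ := by
  obtain ⟨hπ_prob, hπ_fst, hπ_snd⟩ := hπ
  obtain ⟨hπ'_prob, hπ'_fst, hπ'_snd⟩ := hπ'
  refine ⟨⟨?_⟩, ?_, ?_⟩
  · simp [hst]
  · rw [Measure.map_add _ _ measurable_fst, Measure.map_smul, Measure.map_smul, hπ_fst,
      hπ'_fst, ← add_smul, hst, one_smul]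
  · rw [Measure.map_add _ _ measurable_snd, Measure.map_smul, Measure.map_smul, hπ_snd,
      hπ'_snd, ← add_smul, hst, one_smul]

variable {c : X × X → ℝ≥0∞}

theorem IsOptimalPlan.lintegral_eq (hπ : IsOptimalPlan c μ₀ μ₁ π)
    (hπ' : IsOptimalPlan c μ₀ μ₁ π') : ∫⁻ p, c p ∂π = ∫⁻ p, c p ∂π' :=
  le_antisymm (hπ.2 π' hπ'.1) (hπ'.2 π hπ.1)

theorem IsOptimalPlan.smul_add_smul (hπ : IsOptimalPlan c μ₀ μ₁ π)
    (hπ' : IsOptimalPlan c μ₀ μ₁ π') (hst : s + t = 1) :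
    IsOptimalPlan c μ₀ μ₁ (s • π + t • π') := by
  refine ⟨hπ.1.smul_add_smul hπ'.1 hst, fun τ hτ => ?_⟩
  calc ∫⁻ p, c p ∂(s • π + t • π')
      = s * ∫⁻ p, c p ∂π + t * ∫⁻ p, c p ∂π' := by
        rw [lintegral_add_measure, lintegral_smul_measure, lintegral_smul_measure, smul_eq_mul,
          smul_eq_mul]
    _ = ∫⁻ p, c p ∂π := by rw [← hπ.lintegral_eq hπ', ← add_mul, hst, one_mul]
    _ ≤ ∫⁻ p, c p ∂τ := hπ.2 τ hτ

end Couplings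

section Graphs

variable {X Y : Type*} [MeasurableSpace X] [MeasurableSpace Y] {T : X → Y}

theorem ae_snd_eq_map_graph [MeasurableEq Y] (hT : Measurable T) (μ : Measure X) :
    ∀ᵐ p ∂μ.map (fun x => (x, T x)), p.2 = T p.1 :=
  (ae_map_iff (measurable_id.prodMk hT).aemeasurable
    (measurableSet_eq_fun measurable_snd (hT.comp measurable_fst))).2 (ae_of_all _ fun _ => rfl)

theorem eq_map_graph_of_ae_snd_eq (hT : Measurable T) {π : Measure (X × Y)}
    (h : ∀ᵐ p ∂π, p.2 = T p.1) : π = (π.map Prod.fst).map (fun x => (x, T x)) :=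
  calc π = π.map id := Measure.map_id.symm
    _ = π.map (fun p => (p.1, T p.1)) := Measure.map_congr (h.mono fun _ hp => Prod.ext rfl hp)
    _ = (π.map Prod.fst).map (fun x => (x, T x)) :=
      (Measure.map_map (measurable_id.prodMk hT) measurable_fst).symm

end Graphs

theorem uniqueness_of_minimizer_when_induced_by_maps_general
    {X : Type*} [MetricSpace X] [TopologicalSpace.SeparableSpace X]
    [MeasurableSpace X] [BorelSpace X]
    (μ₀ μ₁ : Measure X)
    (c : X × X → ENNReal)
    (hmaps : ∀ π : Measure (X × X), IsOptimalPlan c μ₀ μ₁ π →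
      ∃ T : X → X, Measurable T ∧ π = μ₀.map (fun x => (x, T x))) :
    ∀ π π' : Measure (X × X), IsOptimalPlan c μ₀ μ₁ π → IsOptimalPlan c μ₀ μ₁ π' →
      π = π' := by
  intro π π' hπ hπ'
  have h_half : (2⁻¹ : ℝ≥0∞) ≠ 0 := ENNReal.inv_ne_zero.2 ENNReal.ofNat_ne_top
  obtain ⟨T, hT, hσ⟩ := hmaps _ (hπ.smul_add_smul hπ' ENNReal.inv_two_add_inv_two)
  have hσ_graph : ∀ᵐ p ∂(2⁻¹ : ℝ≥0∞) • π + (2⁻¹ : ℝ≥0∞) • π', p.2 = T p.1 :=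
    hσ ▸ ae_snd_eq_map_graph hT μ₀
  have hπ_graph : ∀ᵐ p ∂π, p.2 = T p.1 :=
    ((Measure.absolutelyContinuous_smul h_half).add_right _).ae_le hσ_graph
  have hπ'_graph : ∀ᵐ p ∂π', p.2 = T p.1 :=
    ((Measure.absolutelyContinuous_smul h_half).add_right' _).ae_le hσ_graph
  rw [eq_map_graph_of_ae_snd_eq hT hπ_graph, eq_map_graph_of_ae_snd_eq hT hπ'_graph,
    hπ.1.2.1, hπ'.1.2.1]

theorem uniqueness_of_minimizer_when_induced_by_maps
    {X : Type*} [MetricSpace X] [CompleteSpace X] [TopologicalSpace.SeparableSpace X]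
    [MeasurableSpace X] [BorelSpace X]
    (μ₀ μ₁ : Measure X) [IsProbabilityMeasure μ₀] [IsProbabilityMeasure μ₁]
    (c : X × X → ENNReal) (hc : Measurable c)
    (hex : ∃ π : Measure (X × X), IsOptimalPlan c μ₀ μ₁ π ∧ ∫⁻ p, c p ∂π < ⊤)
    (hmaps : ∀ π : Measure (X × X), IsOptimalPlan c μ₀ μ₁ π →
      ∃ T : X → X, Measurable T ∧ π = μ₀.map (fun x => (x, T x))) :
    ∀ π π' : Measure (X × X), IsOptimalPlan c μ₀ μ₁ π → IsOptimalPlan c μ₀ μ₁ π' →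
      π = π' :=
  uniqueness_of_minimizer_when_induced_by_maps_general μ₀ μ₁ c hmaps
end

section
/- Let (X,d) be a proper geodesic complete separable metric space, Λ⊂X×X compact and A⊂X compact. Then for every t∈[0,1] the evolution set A_{t,Λ} = e_t((e_0,e_1)^{-1}((A×X)∩Λ)) is compact, where e_t denotes evaluation of a geodesic at time t. -/
/-!
A point lies in `A_{t,Λ}` exactly when it is a `t`-intermediate point of some pair `(x, y) ∈ Λ`
with `x ∈ A`, i.e. `d(x, z) = t d(x, y)` and `d(z, y) = (1 - t) d(x, y)`: conversely a geodesic
through such a `z` is obtained by concatenating geodesics `x ⇝ z` and `z ⇝ y`. The intermediate-point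
relation is closed and, over the compact set `Λ ∩ (A × X)`, bounded; in a proper space its graph is
therefore compact, and `A_{t,Λ}` is the projection of that graph. No compactness argument on the
space of geodesics is needed.
-/

open Set Metric

/-- The evolution set `A_{t,Λ} = e_t((e_0,e_1)⁻¹((A × X) ∩ Λ))
= {γ_t : γ geodesic, γ_0 ∈ A, (γ_0,γ_1) ∈ Λ}`. -/
def evoSet {X : Type*} [MetricSpace X] (A : Set X) (Λ : Set (X × X)) (t : ℝ) : Set X :=
  {z | ∃ γ : ℝ → X, IsGeodesic γ ∧ γ 0 ∈ A ∧ (γ 0, γ 1) ∈ Λ ∧ γ t = z}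

open scoped NNReal

theorem LipschitzOnWith.Icc_union_Icc {X : Type*} [PseudoMetricSpace X] {f : ℝ → X} {K : ℝ≥0}
    {a b c : ℝ} (hab : LipschitzOnWith K f (Icc a b)) (hbc : LipschitzOnWith K f (Icc b c)) :
    LipschitzOnWith K f (Icc a c) := by
  refine LipschitzOnWith.of_dist_le_mul fun s hs s' hs' => ?_
  wlog hss' : s ≤ s' generalizing s s'
  · rw [dist_comm, dist_comm s]
    exact this s' hs' s hs (le_of_not_ge hss')
  rcases le_total s' b with hs'b | hbs'
  · exact hab.dist_le_mul s ⟨hs.1, hss'.trans hs'b⟩ s' ⟨hs'.1, hs'b⟩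
  rcases le_total b s with hbs | hsb
  · exact hbc.dist_le_mul s ⟨hbs, hs.2⟩ s' ⟨hbs', hs'.2⟩
  calc dist (f s) (f s') ≤ dist (f s) (f b) + dist (f b) (f s') := dist_triangle _ _ _
    _ ≤ K * dist s b + K * dist b s' :=
        add_le_add (hab.dist_le_mul s ⟨hs.1, hsb⟩ b ⟨hs.1.trans hsb, le_rfl⟩)
          (hbc.dist_le_mul b ⟨le_rfl, hbs'.trans hs'.2⟩ s' ⟨hbs', hs'.2⟩)
    _ = K * dist s s' := by
        simp only [Real.dist_eq, abs_of_nonpos (sub_nonpos.2 hsb), abs_of_nonpos (sub_nonpos.2 hbs'),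
          abs_of_nonpos (sub_nonpos.2 hss')]
        ring

section Geodesic

variable {X : Type*} [MetricSpace X]

/-- The triangle inequality `d(γ_0, γ_1) ≤ d(γ_0, γ_s) + d(γ_s, γ_s') + d(γ_s', γ_1)` forces each
Lipschitz bound to be an equality. -/
theorem isGeodesic_of_lipschitzOnWith {γ : ℝ → X}
    (hγ : LipschitzOnWith (nndist (γ 0) (γ 1)) γ (Icc 0 1)) : IsGeodesic γ := by
  have h0 : (0 : ℝ) ∈ Icc (0 : ℝ) 1 := left_mem_Icc.2 zero_le_one
  have h1 : (1 : ℝ) ∈ Icc (0 : ℝ) 1 := right_mem_Icc.2 zero_le_one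
  have bound : ∀ s ∈ Icc (0 : ℝ) 1, ∀ s' ∈ Icc (0 : ℝ) 1, s ≤ s' →
      dist (γ s) (γ s') ≤ (s' - s) * dist (γ 0) (γ 1) := fun s hs s' hs' hss' => by
    simpa [Real.dist_eq, abs_of_nonpos (sub_nonpos.2 hss'), mul_comm] using
      hγ.dist_le_mul s hs s' hs'
  intro s hs s' hs'
  wlog hss' : s ≤ s' generalizing s s'
  · rw [dist_comm, abs_sub_comm]
    exact this s' hs' s hs (le_of_not_ge hss')
  rw [abs_of_nonpos (sub_nonpos.2 hss'), neg_sub]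
  refine le_antisymm (bound s hs s' hs' hss') ?_
  have := dist_triangle4 (γ 0) (γ s) (γ s') (γ 1)
  linarith [bound 0 h0 s hs hs.1, bound s' hs' 1 h1 hs'.2]

theorem IsGeodesic.lipschitzOnWith_reparam {γ : ℝ → X} (hγ : IsGeodesic γ) {a b : ℝ} {D : ℝ≥0}
    (hD : dist (γ 0) (γ 1) = (b - a) * D) :
    LipschitzOnWith D (fun s => γ ((s - a) / (b - a))) (Icc a b) := by
  refine LipschitzOnWith.of_dist_le_mul fun s hs s' hs' => ?_
  rcases (hs.1.trans hs.2).eq_or_lt with hab | hab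
  · obtain rfl : s = s' := by
      rw [← hab] at hs hs'
      linarith [hs.1, hs.2, hs'.1, hs'.2]
    simp
  have mem : ∀ r ∈ Icc a b, (r - a) / (b - a) ∈ Icc (0 : ℝ) 1 := fun r hr =>
    ⟨div_nonneg (sub_nonneg.2 hr.1) (sub_pos.2 hab).le,
      (div_le_one (sub_pos.2 hab)).2 (sub_le_sub_right hr.2 a)⟩
  rw [hγ _ (mem s hs) _ (mem s' hs'), hD, ← sub_div, sub_sub_sub_cancel_right, abs_div,
    abs_of_pos (sub_pos.2 hab), Real.dist_eq]
  apply le_of_eq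
  field_simp

end Geodesic

section IntermediatePoints

variable {X : Type*} [MetricSpace X]

def intermediatePoints (t : ℝ) (x y : X) : Set X :=
  {z | dist x z = t * dist x y ∧ dist z y = (1 - t) * dist x y}

theorem IsGeodesic.apply_mem_intermediatePoints {γ : ℝ → X} (hγ : IsGeodesic γ) {t : ℝ}
    (ht : t ∈ Icc (0 : ℝ) 1) : γ t ∈ intermediatePoints t (γ 0) (γ 1) := by
  constructor
  · rw [hγ 0 (left_mem_Icc.2 zero_le_one) t ht, zero_sub, abs_neg, abs_of_nonneg ht.1]
  · rw [hγ t ht 1 (right_mem_Icc.2 zero_le_one), abs_sub_comm, abs_of_nonneg (sub_nonneg.2 ht.2)]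

/-- Concatenate geodesics `x ⇝ z` and `z ⇝ y`, run on `[0, t]` and `[t, 1]`. -/
theorem GeodesicMetricSpace.exists_isGeodesic_apply_eq (hgeo : GeodesicMetricSpace X) {t : ℝ}
    (ht : t ∈ Icc (0 : ℝ) 1) {x y z : X} (hz : z ∈ intermediatePoints t x y) :
    ∃ γ : ℝ → X, IsGeodesic γ ∧ γ 0 = x ∧ γ 1 = y ∧ γ t = z := by
  obtain ⟨γ₁, hγ₁, hγ₁0, hγ₁1⟩ := hgeo x z
  obtain ⟨γ₂, hγ₂, hγ₂0, hγ₂1⟩ := hgeo z y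
  have hγ₁t : γ₁ (t / t) = z := by
    rcases ht.1.eq_or_lt with rfl | htpos
    · rw [div_zero, hγ₁0, ← dist_eq_zero, hz.1, zero_mul]
    · rw [div_self htpos.ne', hγ₁1]
  set γ : ℝ → X := fun s => if s ≤ t then γ₁ (s / t) else γ₂ ((s - t) / (1 - t))
  have hγ0 : γ 0 = x := by simp [γ, ht.1, hγ₁0]
  have hγ1 : γ 1 = y := by
    rcases ht.2.eq_or_lt with rfl | htlt
    · have hzy : z = y := dist_eq_zero.1 (by rw [hz.2, sub_self, zero_mul])
      simp [γ, hγ₁1, hzy]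
    · simp [γ, htlt.not_ge, div_self (sub_pos.2 htlt).ne', hγ₂1]
  have first : LipschitzOnWith (nndist x y) γ (Icc 0 t) := by
    have h := hγ₁.lipschitzOnWith_reparam (a := 0) (b := t) (D := nndist x y)
      (by rw [hγ₁0, hγ₁1, hz.1, coe_nndist, sub_zero])
    simp only [sub_zero] at h
    exact fun s hs s' hs' => by simpa [γ, hs.2, hs'.2] using h hs hs'
  have second : LipschitzOnWith (nndist x y) γ (Icc t 1) := by
    have h := hγ₂.lipschitzOnWith_reparam (a := t) (b := 1) (D := nndist x y)
      (by rw [hγ₂0, hγ₂1, hz.2, coe_nndist])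
    have eq : EqOn γ (fun s => γ₂ ((s - t) / (1 - t))) (Icc t 1) := fun s hs => by
      rcases hs.1.eq_or_lt with rfl | hts
      · simp [γ, hγ₁t, hγ₂0]
      · simp [γ, hts.not_ge]
    exact fun s hs s' hs' => by simpa [eq hs, eq hs'] using h hs hs'
  refine ⟨γ, isGeodesic_of_lipschitzOnWith ?_, hγ0, hγ1, by simpa [γ] using hγ₁t⟩
  rw [hγ0, hγ1]
  exact first.Icc_union_Icc second

theorem GeodesicMetricSpace.evoSet_eq (hgeo : GeodesicMetricSpace X) (A : Set X)
    (Λ : Set (X × X)) {t : ℝ} (ht : t ∈ Icc (0 : ℝ) 1) :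
    evoSet A Λ t = ⋃ p ∈ Λ ∩ A ×ˢ univ, intermediatePoints t p.1 p.2 := by
  ext z
  simp only [evoSet, mem_iUnion, mem_inter_iff, mem_prod, mem_univ, and_true, exists_prop,
    Prod.exists]
  constructor
  · rintro ⟨γ, hγ, hA, hΛ, rfl⟩
    exact ⟨γ 0, γ 1, ⟨hΛ, hA⟩, hγ.apply_mem_intermediatePoints ht⟩
  · rintro ⟨x, y, ⟨hΛ, hA⟩, hz⟩
    obtain ⟨γ, hγ, rfl, rfl, rfl⟩ := hgeo.exists_isGeodesic_apply_eq ht hz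
    exact ⟨γ, hγ, hA, hΛ, rfl⟩

theorem isClosed_setOf_mem_intermediatePoints (t : ℝ) :
    IsClosed {q : (X × X) × X | q.2 ∈ intermediatePoints t q.1.1 q.1.2} := by
  have hd : Continuous fun q : (X × X) × X => dist q.1.1 q.1.2 := by fun_prop
  exact (isClosed_eq (by fun_prop) (continuous_const.mul hd)).inter
    (isClosed_eq (by fun_prop) ((continuous_const.sub continuous_const).mul hd))

/-- The union is the projection of a closed subset of `K × cthickening C (Prod.fst '' K)`, with `C`
a bound for `|t| · d(x, y)` on `K`. -/
theorem IsCompact.biUnion_intermediatePoints [ProperSpace X] {K : Set (X × X)} (hK : IsCompact K)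
    (t : ℝ) : IsCompact (⋃ p ∈ K, intermediatePoints t p.1 p.2) := by
  obtain ⟨C, hC⟩ := hK.exists_bound_of_continuousOn
    (f := fun p : X × X => |t| * dist p.1 p.2) (by fun_prop)
  set S := {q : (X × X) × X | q.1 ∈ K ∧ q.2 ∈ intermediatePoints t q.1.1 q.1.2}
  have hS : IsCompact S := by
    refine (hK.prod ((hK.image continuous_fst).cthickening (r := C))).of_isClosed_subset
      ((hK.isClosed.preimage continuous_fst).inter (isClosed_setOf_mem_intermediatePoints t)) ?_
    rintro ⟨p, z⟩ ⟨hp, hz⟩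
    refine ⟨hp, mem_cthickening_of_dist_le z p.1 C _ (mem_image_of_mem _ hp) ?_⟩
    calc dist z p.1 = t * dist p.1 p.2 := by rw [dist_comm, hz.1]
      _ ≤ |t| * dist p.1 p.2 := mul_le_mul_of_nonneg_right (le_abs_self t) dist_nonneg
      _ ≤ C := (le_abs_self _).trans (hC p hp)
  convert hS.image continuous_snd
  ext z
  simp [S]

end IntermediatePoints

theorem evolution_set_compact_general
    {X : Type*} [MetricSpace X] [ProperSpace X]
    (hgeo : GeodesicMetricSpace X)
    (Λ : Set (X × X)) (hΛcpt : IsCompact Λ)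
    (A : Set X) (hAcpt : IsCompact A)
    (t : ℝ) (ht : t ∈ Set.Icc (0:ℝ) 1) :
    IsCompact (evoSet A Λ t) := by
  rw [hgeo.evoSet_eq A Λ ht]
  exact (hΛcpt.inter_right (hAcpt.isClosed.prod isClosed_univ)).biUnion_intermediatePoints t

theorem evolution_set_compact
    {X : Type*} [MetricSpace X] [ProperSpace X] [CompleteSpace X]
    [TopologicalSpace.SeparableSpace X]
    (hgeo : GeodesicMetricSpace X)
    (Λ : Set (X × X)) (hΛcpt : IsCompact Λ)
    (A : Set X) (hAcpt : IsCompact A)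
    (t : ℝ) (ht : t ∈ Set.Icc (0:ℝ) 1) :
    IsCompact (evoSet A Λ t) :=
  evolution_set_compact_general hgeo Λ hΛcpt A hAcpt t ht
end
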